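/- Every prime number p belongs to the Eratosthenes ray r_{n} for exactly one non-prime seed n ∈ ℕ \ P with n ≥ 1; that is, the set of primes is the disjoint union over non-prime seeds n of the rays r_n. -/

import Mathlib

/-!
`E` maps the positive integers bijectively onto the primes and satisfies `n < E n`. Hence every
prime `p` has a unique predecessor `m < p` with `E m = p`, and `p` lies on the ray of a seed `n`
exactly when `m = n` or `m` lies on that ray. Since rays consist of primes, a non-prime `m` is
itself the seed, while a prime `m` inherits its unique seed by strong induction.
-/

noncomputable def E (n : ℕ) : ℕ := Nat.nth Nat.Prime (n - 1)

def ray (n : ℕ) : Set ℕ := {x | ∃ k : ℕ, 1 ≤ k ∧ E^[k] n = x}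

lemma prime_E (n : ℕ) : (E n).Prime := Nat.prime_nth_prime _

lemma lt_E {n : ℕ} (hn : 1 ≤ n) : n < E n := by
  have := Nat.add_two_le_nth_prime (n - 1)
  unfold E
  omega

lemma E_injOn : Set.InjOn E {n | 1 ≤ n} := fun a ha b hb h => by
  have := Nat.nth_injective Nat.infinite_setOfPred_prime h
  simp only [Set.mem_ofPred_eq] at ha hb
  omega

lemma exists_E_eq {p : ℕ} (hp : p.Prime) : ∃ m, 1 ≤ m ∧ m < p ∧ E m = p := by
  have hE : E (Nat.count Nat.Prime p + 1) = p := by simpa [E] using Nat.nth_count hp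
  have hlt := lt_E (Nat.le_add_left 1 (Nat.count Nat.Prime p))
  rw [hE] at hlt
  exact ⟨_, Nat.le_add_left 1 _, hlt, hE⟩

lemma prime_of_mem_ray {n x : ℕ} (hx : x ∈ ray n) : x.Prime := by
  obtain ⟨k, hk, rfl⟩ := hx
  obtain ⟨j, rfl⟩ := Nat.exists_eq_add_of_le' hk
  rw [Function.iterate_succ_apply']
  exact prime_E _

lemma ray_eq_insert_image (n : ℕ) : ray n = insert (E n) (E '' ray n) := by
  ext x
  constructor
  · rintro ⟨k, hk, rfl⟩
    obtain ⟨j, rfl⟩ := Nat.exists_eq_add_of_le' hk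
    rcases j with _ | j
    · exact Or.inl rfl
    · exact Or.inr ⟨E^[j + 1] n, ⟨j + 1, by omega, rfl⟩,
        (Function.iterate_succ_apply' E _ n).symm⟩
  · rintro (rfl | ⟨y, ⟨k, hk, rfl⟩, rfl⟩)
    · exact ⟨1, le_rfl, rfl⟩
    · exact ⟨k + 1, by omega, Function.iterate_succ_apply' E k n⟩

lemma E_mem_ray_iff {m n : ℕ} (hm : 1 ≤ m) (hn : 1 ≤ n) :
    E m ∈ ray n ↔ m = n ∨ m ∈ ray n := by
  rw [Set.ext_iff.1 (ray_eq_insert_image n) (E m), Set.mem_insert_iff, E_injOn.eq_iff hm hn,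
    Set.mem_image]
  refine or_congr_right ⟨?_, fun h => ⟨m, h, rfl⟩⟩
  rintro ⟨q, hq, hqm⟩
  rwa [← E_injOn (prime_of_mem_ray hq).one_lt.le hm hqm]

theorem prime_in_unique_ray (p : ℕ) (hp : p.Prime) :
    ∃! n : ℕ, 1 ≤ n ∧ ¬ n.Prime ∧ p ∈ ray n := by
  induction p using Nat.strong_induction_on with
  | _ p ih =>
  obtain ⟨m, hm, hmp, rfl⟩ := exists_E_eq hp
  by_cases hm' : m.Prime
  · refine (existsUnique_congr fun n => and_congr_right fun hn => and_congr_right fun hn' => ?_).2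
      (ih m hmp hm')
    rw [E_mem_ray_iff hm hn]
    exact or_iff_right (by rintro rfl; exact hn' hm')
  · refine (existsUnique_congr fun n => ⟨?_, ?_⟩).2 (existsUnique_eq (a' := m))
    · rintro ⟨hn, -, h⟩
      exact ((E_mem_ray_iff hm hn).1 h).resolve_right (fun h => hm' (prime_of_mem_ray h)) |>.symm
    · rintro rfl
      exact ⟨hm, hm', (E_mem_ray_iff hm hm).2 (Or.inl rfl)⟩
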